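/- Residue identity underlying Proposition 2.1 (momentum equals the sum of the quadratic charges). Assume ℓ^∞ ≠ 0 and that the twist function φ has M := Σ_{α∈Σ} m_α pairwise distinct simple zeros ζ_1, …, ζ_M (which are then automatically distinct from the poles z_α). Then Σ_{α∈Σ} D^α_0 = − Σ_{i=1}^M B(Γ(ζ_i), Γ(ζ_i))/(2 φ'(ζ_i)). (Equivalently: the rational 1-form Q(z) dz, with Q(z) = −B(Γ(z),Γ(z))/(2φ(z)), is regular at z = ∞, its residue at ζ_i equals −B(Γ(ζ_i),Γ(ζ_i))/(2φ'(ζ_i)), its residue at z_α equals −D^α_0, and the sum of all its residues vanishes.) -/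

import Mathlib

/-!
Clearing denominators, `P = D · φ` with `D = ∏_α (X - z_α) ^ (m_α + 1)` is a polynomial of
degree `M` and leading coefficient `-ℓ^∞`, hence `P = -ℓ^∞ ∏_i (X - ζ_i)`. Expanding `B(Γ, Γ)`,
the claim reduces to the residue identities
`Σ_i (ζ_i - z_α)^{-(q+1)} (ζ_i - z_β)^{-(r+1)} / φ'(ζ_i) = -δ_{αβ} κ^α_{q+r}`.
As `φ'(ζ_i) = P'(ζ_i) / D(ζ_i)`, such a sum equals `Σ_i F(ζ_i) / P'(ζ_i)` for any polynomial
`F` of degree `< M` agreeing with `D (X - z_α)^{-(q+1)} (X - z_β)^{-(r+1)}` on the `ζ_i`, which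
Lagrange interpolation evaluates as `-(coefficient of X^{M-1} in F) / ℓ^∞`. When `D` absorbs the
pole, `F` is the exact quotient and has degree `≤ M - 2`. Otherwise `α = β`, `q + r ≥ m_α`, and
the `κ^α` invert the principal part of `P` at `z_α` modulo `(X - z_α)^{m_α+1}`; on the zeros of
`P` this trades `D` for a polynomial whose top coefficient is `ℓ^∞ κ^α_{q+r}`.
-/

open scoped BigOperators Topology
open Filter

/-- The partial-fraction part `χ(w)` of a twist function (site `a` has multiplicity `m a + 1`). -/
noncomputable def chiFun {n : ℕ} (z : Fin n → ℂ) (m : Fin n → ℕ)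
    (l : Fin n → ℕ → ℂ) (w : ℂ) : ℂ :=
  ∑ a, ∑ p ∈ Finset.range (m a + 1), l a p / (w - z a) ^ (p + 1)

/-- A `V`-valued Gaudin Lax matrix `Γ(w) = Σ_α Σ_p v^α_p (w - z_α)^{-(p+1)}`. -/
noncomputable def gamFun {n : ℕ} {V : Type*} [AddCommGroup V] [Module ℂ V]
    (z : Fin n → ℂ) (m : Fin n → ℕ) (v : Fin n → ℕ → V) (w : ℂ) : V :=
  ∑ a, ∑ p ∈ Finset.range (m a + 1), ((w - z a) ^ (p + 1))⁻¹ • v a p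

/-- The generalised Segal–Sugawara quantity
`D^α_p = (1/2) Σ_{q,r, q+r ≥ p} κ^α_{q+r-p} B(v^α_q, v^α_r)`. -/
noncomputable def ssInt {n : ℕ} {V : Type*} [AddCommGroup V] [Module ℂ V]
    (B : V →ₗ[ℂ] V →ₗ[ℂ] ℂ) (m : Fin n → ℕ) (κ : Fin n → ℕ → ℂ)
    (v : Fin n → ℕ → V) (a : Fin n) (p : ℕ) : ℂ :=
  (1 / 2) * ∑ q ∈ Finset.range (m a + 1), ∑ r ∈ Finset.range (m a + 1),
    if p ≤ q + r then κ a (q + r - p) * B (v a q) (v a r) else 0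

theorem sum_mul_bilin_sum_smul {R M ι κ : Type*} [CommSemiring R] [AddCommMonoid M]
    [Module R M] (B : M →ₗ[R] M →ₗ[R] R) (t : Finset κ) (s : Finset ι) (w : κ → R)
    (c : κ → ι → R) (e : ι → M) :
    ∑ i ∈ t, w i * B (∑ x ∈ s, c i x • e x) (∑ y ∈ s, c i y • e y)
      = ∑ x ∈ s, ∑ y ∈ s, (∑ i ∈ t, w i * c i x * c i y) * B (e x) (e y) := by
  simp only [map_sum, map_smul, LinearMap.sum_apply, LinearMap.smul_apply, smul_eq_mul,
    Finset.mul_sum, Finset.sum_mul]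
  conv_lhs => rw [Finset.sum_comm]
  conv_rhs => rw [Finset.sum_comm]
  refine Finset.sum_congr rfl fun y _ => ?_
  rw [Finset.sum_comm]
  exact Finset.sum_congr rfl fun x _ => Finset.sum_congr rfl fun i _ => by ring

namespace Lagrange

open Polynomial Finset

theorem sum_eval_div_eval_derivative_nodal {F ι : Type*} [Field F] [DecidableEq ι]
    {s : Finset ι} {v : ι → F} (hvs : Set.InjOn v s) {P : F[X]} (hP : P.degree < #s) :
    ∑ i ∈ s, P.eval (v i) / (derivative (nodal s v)).eval (v i) = P.coeff (#s - 1) := by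
  rw [coeff_eq_sum hvs hP]
  refine Finset.sum_congr rfl fun i hi => ?_
  rw [eval_nodal_derivative_eval_node_eq hi, eval_nodal]

end Lagrange

namespace TwistFunction

open Polynomial Finset

variable {n : ℕ} (z : Fin n → ℂ) (m : Fin n → ℕ)

noncomputable def poleDivisor (s : Finset (Fin n)) : ℂ[X] :=
  ∏ c ∈ s, (X - C (z c)) ^ (m c + 1)

theorem poleDivisor_monic (s : Finset (Fin n)) : (poleDivisor z m s).Monic :=
  monic_prod_of_monic _ _ fun _ _ => (monic_X_sub_C _).pow _

theorem natDegree_poleDivisor (s : Finset (Fin n)) :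
    (poleDivisor z m s).natDegree = ∑ c ∈ s, (m c + 1) := by
  rw [poleDivisor, natDegree_prod_of_monic _ _ fun c _ => (monic_X_sub_C _).pow _]
  simp

theorem poleDivisor_eq_mul_erase {s : Finset (Fin n)} {a : Fin n} (ha : a ∈ s) :
    poleDivisor z m s = (X - C (z a)) ^ (m a + 1) * poleDivisor z m (s.erase a) :=
  (Finset.mul_prod_erase s _ ha).symm

theorem eval_poleDivisor_ne_zero (s : Finset (Fin n)) {w : ℂ} (hw : ∀ c, w ≠ z c) :
    (poleDivisor z m s).eval w ≠ 0 := by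
  simp only [poleDivisor, eval_prod, eval_pow, eval_sub, eval_X, eval_C]
  exact Finset.prod_ne_zero_iff.2 fun c _ => pow_ne_zero _ (sub_ne_zero.2 (hw c))

variable (l : Fin n → ℕ → ℂ) (linf : ℂ)

noncomputable def principalNumerator (a : Fin n) : ℂ[X] :=
  ∑ p ∈ range (m a + 1), C (l a p) * (X - C (z a)) ^ (m a - p)

theorem natDegree_principalNumerator_le (a : Fin n) :
    (principalNumerator z m l a).natDegree ≤ m a := by
  refine natDegree_sum_le_of_forall_le _ _ fun p _ => (natDegree_C_mul_le _ _).trans ?_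
  rw [natDegree_pow, natDegree_X_sub_C, mul_one]
  omega

theorem eval_principalNumerator {a : Fin n} {w : ℂ} (hw : w ≠ z a) :
    (principalNumerator z m l a).eval w
      = (w - z a) ^ (m a + 1) * ∑ p ∈ range (m a + 1), l a p / (w - z a) ^ (p + 1) := by
  simp only [principalNumerator, eval_finsetSum, eval_mul, eval_C, eval_pow, eval_sub, eval_X,
    Finset.mul_sum]
  refine Finset.sum_congr rfl fun p hp => ?_
  have hsplit : (w - z a) ^ (m a + 1) = (w - z a) ^ (m a - p) * (w - z a) ^ (p + 1) := by
    rw [← pow_add]; congr 1; have := mem_range.1 hp; omega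
  rw [hsplit]
  field_simp [sub_ne_zero.2 hw]

/-- `D · φ` for `D = poleDivisor z m univ`. -/
noncomputable def twistNumerator : ℂ[X] :=
  ∑ c, principalNumerator z m l c * poleDivisor z m (univ.erase c) - C linf * poleDivisor z m univ

theorem eval_twistNumerator {w : ℂ} (hw : ∀ c, w ≠ z c) :
    (twistNumerator z m l linf).eval w
      = (poleDivisor z m univ).eval w * (chiFun z m l w - linf) := by
  simp only [twistNumerator, chiFun, eval_sub, eval_finsetSum, eval_mul, eval_C, mul_sub,
    Finset.mul_sum]
  congr 1
  · refine Finset.sum_congr rfl fun c _ => ?_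
    rw [poleDivisor_eq_mul_erase z m (mem_univ c), eval_principalNumerator z m l (hw c),
      eval_mul]
    simp only [eval_pow, eval_sub, eval_X, eval_C, Finset.mul_sum, Finset.sum_mul]
    exact Finset.sum_congr rfl fun p _ => by ring
  · ring

theorem degree_sum_principalNumerator_mul_lt :
    (∑ c, principalNumerator z m l c * poleDivisor z m (univ.erase c)).degree
      < ((∑ c, (m c + 1) : ℕ) : WithBot ℕ) := by
  refine (degree_sum_le _ _).trans_lt ((Finset.sup_lt_iff (WithBot.bot_lt_coe _)).2 fun c _ => ?_)
  refine (degree_le_natDegree).trans_lt ?_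
  have hsplit := Finset.add_sum_erase univ (fun c => m c + 1) (mem_univ c)
  have := natDegree_mul_le_of_le (natDegree_principalNumerator_le z m l c)
    (natDegree_poleDivisor z m (univ.erase c)).le
  exact_mod_cast (by omega)

theorem natDegree_twistNumerator_le :
    (twistNumerator z m l linf).natDegree ≤ ∑ c, (m c + 1) := by
  refine (natDegree_sub_le _ _).trans (max_le ?_ ?_)
  · exact natDegree_le_of_degree_le (degree_sum_principalNumerator_mul_lt z m l).le
  · exact (natDegree_C_mul_le _ _).trans (natDegree_poleDivisor z m univ).le

theorem coeff_twistNumerator :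
    (twistNumerator z m l linf).coeff (∑ c, (m c + 1)) = -linf := by
  have hlead : (poleDivisor z m univ).coeff (∑ c, (m c + 1)) = 1 := by
    simpa [natDegree_poleDivisor] using (poleDivisor_monic z m univ).coeff_natDegree
  rw [twistNumerator, coeff_sub, coeff_C_mul, hlead,
    coeff_eq_zero_of_degree_lt (degree_sum_principalNumerator_mul_lt z m l)]
  ring

theorem twistNumerator_eq_C_mul_nodal {M : ℕ} (hM : M = ∑ c, (m c + 1)) {ζ : Fin M → ℂ}
    (hζ : Function.Injective ζ) (hroot : ∀ i, (twistNumerator z m l linf).eval (ζ i) = 0) :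
    twistNumerator z m l linf = C (-linf) * Lagrange.nodal univ ζ := by
  have hnodal : (Lagrange.nodal univ ζ).natDegree = M := by
    rw [Lagrange.natDegree_nodal, card_univ, Fintype.card_fin]
  have hlead : (Lagrange.nodal univ ζ).coeff M = 1 := by
    have := (Lagrange.nodal_monic (s := univ) (v := ζ)).leadingCoeff
    rwa [leadingCoeff, hnodal] at this
  have hdeg : (twistNumerator z m l linf).natDegree ≤ M := by
    rw [hM]; exact natDegree_twistNumerator_le z m l linf
  have htop : (twistNumerator z m l linf).coeff M = -linf := by
    rw [hM]; exact coeff_twistNumerator z m l linf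
  refine eq_of_degree_sub_lt_of_eval_index_eq univ hζ.injOn ?_ fun i _ => ?_
  · rw [card_univ, Fintype.card_fin, degree_lt_iff_coeff_zero]
    intro k hk
    rcases hk.eq_or_lt with rfl | hlt
    · rw [coeff_sub, coeff_C_mul, hlead, htop]
      ring
    · refine coeff_eq_zero_of_natDegree_lt (lt_of_le_of_lt ?_ hlt)
      exact (natDegree_sub_le _ _).trans (max_le hdeg ((natDegree_C_mul_le _ _).trans hnodal.le))
  · rw [hroot i, eval_mul, Lagrange.eval_nodal_at_node (mem_univ i), mul_zero]

theorem X_sub_C_pow_dvd_twistNumerator_sub (a : Fin n) :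
    (X - C (z a)) ^ (m a + 1) ∣
      twistNumerator z m l linf - principalNumerator z m l a * poleDivisor z m (univ.erase a) := by
  have hdvd : ∀ c ∈ univ.erase a,
      (X - C (z a)) ^ (m a + 1) ∣ poleDivisor z m (univ.erase c) :=
    fun c hc => ⟨_, poleDivisor_eq_mul_erase z m
      (mem_erase.2 ⟨fun h => (mem_erase.1 hc).1 h.symm, mem_univ a⟩)⟩
  have hsplit : twistNumerator z m l linf
        - principalNumerator z m l a * poleDivisor z m (univ.erase a)
      = ∑ c ∈ univ.erase a, principalNumerator z m l c * poleDivisor z m (univ.erase c)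
        - C linf * poleDivisor z m univ := by
    rw [twistNumerator, ← Finset.add_sum_erase _ _ (mem_univ a)]
    ring
  rw [hsplit]
  exact dvd_sub (Finset.dvd_sum fun c hc => (hdvd c hc).mul_left _)
    (Dvd.intro _ (poleDivisor_eq_mul_erase z m (mem_univ a)).symm |>.mul_left _)

variable (κ : Fin n → ℕ → ℂ)

/-- Since `1 / φ = Σ_p κ a p (X - z a) ^ (p + 1)` near `z a`, this is the expansion of
`1 / principalNumerator z m l a` at `z a`, truncated to degree `< s`. -/
noncomputable def kappaPoly (a : Fin n) (s : ℕ) : ℂ[X] :=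
  ∑ t ∈ range s, C (κ a (m a + t)) * (X - C (z a)) ^ t

theorem natDegree_kappaPoly_succ_le (a : Fin n) (s : ℕ) :
    (kappaPoly z m κ a (s + 1)).natDegree ≤ s := by
  refine natDegree_sum_le_of_forall_le _ _ fun t ht => (natDegree_C_mul_le _ _).trans ?_
  rw [natDegree_pow, natDegree_X_sub_C, mul_one]
  exact Nat.lt_succ_iff.1 (mem_range.1 ht)

theorem coeff_kappaPoly_succ (a : Fin n) (s : ℕ) :
    (kappaPoly z m κ a (s + 1)).coeff s = κ a (m a + s) := by
  have hpow : ∀ t, ((X - C (z a)) ^ t).natDegree = t := fun t => by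
    rw [natDegree_pow, natDegree_X_sub_C, mul_one]
  have hlead : ((X - C (z a)) ^ s).coeff s = 1 := by
    simpa [hpow] using ((monic_X_sub_C (z a)).pow s).coeff_natDegree
  rw [kappaPoly, sum_range_succ, coeff_add, finsetSum_coeff, coeff_C_mul,
    Finset.sum_eq_zero fun t ht => by
      rw [coeff_C_mul, coeff_eq_zero_of_natDegree_lt (by rw [hpow]; exact mem_range.1 ht),
        mul_zero],
    zero_add, hlead, mul_one]

theorem X_sub_C_pow_dvd_kappaPoly_sub (a : Fin n) {s N : ℕ} (hsN : s ≤ N) :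
    (X - C (z a)) ^ s ∣ kappaPoly z m κ a N - kappaPoly z m κ a s := by
  rw [kappaPoly, kappaPoly, ← Finset.sum_range_add_sum_Ico _ hsN, add_sub_cancel_left]
  exact Finset.dvd_sum fun t ht => (pow_dvd_pow _ (mem_Ico.1 ht).1).mul_left _

theorem X_sub_C_pow_dvd_kappaPoly_mul_principalNumerator_sub_one (a : Fin n)
    (hκ : ∀ q r : ℕ, q ≤ m a → r ≤ m a →
      ∑ p ∈ range (m a + 1 - r), κ a (p + q) * l a (p + r) = if q = r then 1 else 0) :
    (X - C (z a)) ^ (m a + 1) ∣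
      kappaPoly z m κ a (m a + 1) * principalNumerator z m l a - 1 := by
  have hK : (kappaPoly z m κ a (m a + 1)).comp (X + C (z a))
      = ∑ t ∈ range (m a + 1), C (κ a (m a + t)) * X ^ t := by
    simp [kappaPoly]
  have hA : (principalNumerator z m l a).comp (X + C (z a))
      = ∑ j ∈ range (m a + 1), C (l a (m a - j)) * X ^ j := by
    rw [← Finset.sum_range_reflect]
    simp only [principalNumerator, Polynomial.sum_comp, mul_comp, C_comp, pow_comp, sub_comp,
      X_comp, add_sub_cancel_right]
    refine Finset.sum_congr rfl fun j hj => ?_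
    have := mem_range.1 hj
    congr 3; omega
  have hcoeff : ∀ (c : ℕ → ℂ) (k : ℕ),
      (∑ t ∈ range (m a + 1), C (c t) * X ^ t).coeff k = if k ≤ m a then c k else 0 := by
    intro c k
    simp [finsetSum_coeff]
  rw [X_sub_C_pow_dvd_iff, sub_comp, mul_comp, one_comp, hK, hA, X_pow_dvd_iff]
  intro d hd
  have hd' : d ≤ m a := Nat.lt_succ_iff.1 hd
  have hconv : ((∑ t ∈ range (m a + 1), C (κ a (m a + t)) * X ^ t)
        * ∑ j ∈ range (m a + 1), C (l a (m a - j)) * X ^ j).coeff d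
      = ∑ p ∈ range (m a + 1 - (m a - d)), κ a (p + m a) * l a (p + (m a - d)) := by
    rw [coeff_mul, Finset.Nat.sum_antidiagonal_eq_sum_range_succ_mk,
      show m a + 1 - (m a - d) = d + 1 by omega]
    refine Finset.sum_congr rfl fun k hk => ?_
    have := mem_range.1 hk
    rw [hcoeff, hcoeff, if_pos (by omega), if_pos (by omega)]
    congr 2 <;> omega
  rw [coeff_sub, hconv, hκ (m a) (m a - d) le_rfl (by omega), coeff_one]
  by_cases hd0 : d = 0
  · simp [hd0]
  · rw [if_neg (by omega), if_neg hd0, sub_zero]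

theorem X_sub_C_pow_dvd_poleDivisor_erase_sub_kappaPoly_mul (a : Fin n)
    (hκ : ∀ q r : ℕ, q ≤ m a → r ≤ m a →
      ∑ p ∈ range (m a + 1 - r), κ a (p + q) * l a (p + r) = if q = r then 1 else 0)
    {s : ℕ} (hs : s ≤ m a + 1) :
    (X - C (z a)) ^ s
      ∣ poleDivisor z m (univ.erase a) - kappaPoly z m κ a s * twistNumerator z m l linf := by
  set u := X - C (z a)
  set K := kappaPoly z m κ a (m a + 1)
  have hsplit : poleDivisor z m (univ.erase a) - kappaPoly z m κ a s * twistNumerator z m l linf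
      = -(poleDivisor z m (univ.erase a) * (K * principalNumerator z m l a - 1))
        - K * (twistNumerator z m l linf
            - principalNumerator z m l a * poleDivisor z m (univ.erase a))
        + (K - kappaPoly z m κ a s) * twistNumerator z m l linf := by
    ring
  have hdvd : u ^ s ∣ u ^ (m a + 1) := pow_dvd_pow _ hs
  rw [hsplit]
  refine dvd_add (dvd_sub (dvd_neg.2 ?_) ?_) ?_
  · exact (hdvd.trans
      (X_sub_C_pow_dvd_kappaPoly_mul_principalNumerator_sub_one z m l κ a hκ)).mul_left _
  · exact (hdvd.trans (X_sub_C_pow_dvd_twistNumerator_sub z m l linf a)).mul_left _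
  · exact (X_sub_C_pow_dvd_kappaPoly_sub z m κ a hs).mul_right _

theorem kappa_eq_zero_of_lt (a : Fin n) (hl : l a (m a) ≠ 0)
    (hκ : ∀ q r : ℕ, q ≤ m a → r ≤ m a →
      ∑ p ∈ range (m a + 1 - r), κ a (p + q) * l a (p + r) = if q = r then 1 else 0)
    {t : ℕ} (ht : t < m a) : κ a t = 0 := by
  have h := hκ t (m a) ht.le le_rfl
  rw [Nat.add_sub_cancel_left, Finset.sum_range_one, zero_add, zero_add, if_neg ht.ne] at h
  exact (mul_eq_zero.1 h).resolve_right hl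

theorem exists_poleDivisor_erase_sub_kappaPoly_mul_eq (a : Fin n)
    (hκ : ∀ q r : ℕ, q ≤ m a → r ≤ m a →
      ∑ p ∈ range (m a + 1 - r), κ a (p + q) * l a (p + r) = if q = r then 1 else 0)
    {M : ℕ} (hM : M = ∑ c, (m c + 1)) {s : ℕ} (hs : s ≤ m a) :
    ∃ H : ℂ[X],
      poleDivisor z m (univ.erase a) - kappaPoly z m κ a (s + 1) * twistNumerator z m l linf
        = (X - C (z a)) ^ (s + 1) * H
      ∧ H.natDegree < M ∧ H.coeff (M - 1) = linf * κ a (m a + s) := by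
  obtain ⟨H, hH⟩ :=
    X_sub_C_pow_dvd_poleDivisor_erase_sub_kappaPoly_mul z m l linf κ a hκ (s := s + 1) (by omega)
  have hmonic : ((X - C (z a)) ^ (s + 1)).Monic := (monic_X_sub_C _).pow _
  have hdegu : ((X - C (z a)) ^ (s + 1)).natDegree = s + 1 := by
    rw [natDegree_pow, natDegree_X_sub_C, mul_one]
  have hMa : m a + 1 ≤ M := hM ▸ Finset.single_le_sum (f := fun c => m c + 1)
    (fun _ _ => Nat.zero_le _) (mem_univ a)
  have hdegG : (poleDivisor z m (univ.erase a)).natDegree < s + M := by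
    rw [natDegree_poleDivisor]
    have := Finset.sum_erase_add univ (fun c => m c + 1) (mem_univ a)
    omega
  have hdegKP : (kappaPoly z m κ a (s + 1) * twistNumerator z m l linf).natDegree ≤ s + M :=
    natDegree_mul_le_of_le (natDegree_kappaPoly_succ_le z m κ a s)
      (hM ▸ natDegree_twistNumerator_le z m l linf)
  have hdegH : H.natDegree ≤ M - 1 := by
    rcases eq_or_ne H 0 with rfl | hH0
    · simp
    have := hmonic.natDegree_mul' hH0
    have := (natDegree_sub_le _ _).trans (max_le hdegG.le hdegKP)
    rw [hH] at this
    omega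
  refine ⟨H, hH, by omega, ?_⟩
  have hlead : ((X - C (z a)) ^ (s + 1)).coeff (s + 1) = 1 := by
    simpa [hdegu] using hmonic.coeff_natDegree
  have htop := congrArg (coeff · (s + M)) hH
  rw [coeff_sub, coeff_eq_zero_of_natDegree_lt hdegG, coeff_mul_add_eq_of_natDegree_le
      (natDegree_kappaPoly_succ_le z m κ a s) (hM ▸ natDegree_twistNumerator_le z m l linf),
    show s + M = (s + 1) + (M - 1) by omega,
    coeff_mul_add_eq_of_natDegree_le hdegu.le hdegH, hlead, one_mul] at htop
  rw [← htop, coeff_kappaPoly_succ, hM, coeff_twistNumerator]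
  ring

theorem deriv_chiFun_sub_eq {w : ℂ} (hw : ∀ c, w ≠ z c)
    (hroot : (twistNumerator z m l linf).eval w = 0) :
    deriv (fun x => chiFun z m l x - linf) w
      = (derivative (twistNumerator z m l linf)).eval w / (poleDivisor z m univ).eval w := by
  have hnhds : ∀ᶠ x in 𝓝 w, ∀ c, x ≠ z c := by
    simpa only [eventually_all] using fun c => eventually_ne_nhds (hw c)
  have hev : (fun x => chiFun z m l x - linf)
      =ᶠ[𝓝 w] fun x => (twistNumerator z m l linf).eval x / (poleDivisor z m univ).eval x := by
    filter_upwards [hnhds] with x hx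
    rw [eval_twistNumerator z m l linf hx,
      mul_div_cancel_left₀ _ (eval_poleDivisor_ne_zero z m univ hx)]
  rw [hev.deriv_eq, deriv_fun_div (twistNumerator z m l linf).differentiableAt
    (poleDivisor z m univ).differentiableAt (eval_poleDivisor_ne_zero z m univ hw),
    Polynomial.deriv, Polynomial.deriv, hroot, zero_mul, sub_zero, sq, mul_div_mul_right _ _
      (eval_poleDivisor_ne_zero z m univ hw)]

variable {l linf} {M : ℕ} {ζ : Fin M → ℂ}

/-- As `D · φ = -linf · ∏ (X - ζ i)` and `φ' (ζ i) = (D · φ)' (ζ i) / D (ζ i)`, this is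
Lagrange interpolation of `F` at the zeros of `φ`. -/
theorem sum_div_deriv_eq_neg_coeff_div (hM : M = ∑ c, (m c + 1)) (hζ : Function.Injective ζ)
    (hζp : ∀ i c, ζ i ≠ z c) (hζ0 : ∀ i, chiFun z m l (ζ i) - linf = 0)
    {F : ℂ[X]} (hF : F.degree < M) {g : Fin M → ℂ}
    (hFg : ∀ i, F.eval (ζ i) = (poleDivisor z m univ).eval (ζ i) * g i) :
    ∑ i, g i / deriv (fun w => chiFun z m l w - linf) (ζ i) = -(F.coeff (M - 1) / linf) := by
  have hroot : ∀ i, (twistNumerator z m l linf).eval (ζ i) = 0 := fun i => by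
    rw [eval_twistNumerator z m l linf (hζp i), hζ0 i, mul_zero]
  have hlagrange := Lagrange.sum_eval_div_eval_derivative_nodal (s := univ) hζ.injOn
    (by rwa [card_univ, Fintype.card_fin])
  rw [card_univ, Fintype.card_fin] at hlagrange
  rw [← hlagrange, Finset.sum_div, ← Finset.sum_neg_distrib]
  refine Finset.sum_congr rfl fun i _ => ?_
  rw [deriv_chiFun_sub_eq z m l linf (hζp i) (hroot i),
    twistNumerator_eq_C_mul_nodal z m l linf hM hζ hroot, derivative_C_mul, eval_mul, eval_C,
    div_div_eq_mul_div, hFg]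
  ring

theorem sum_inv_pow_mul_inv_pow_div_deriv_eq_zero (hM : M = ∑ c, (m c + 1))
    (hζ : Function.Injective ζ) (hζp : ∀ i c, ζ i ≠ z c)
    (hζ0 : ∀ i, chiFun z m l (ζ i) - linf = 0) {a b : Fin n} {q r : ℕ}
    (hdvd : (X - C (z a)) ^ (q + 1) * (X - C (z b)) ^ (r + 1) ∣ poleDivisor z m univ) :
    ∑ i, ((ζ i - z a) ^ (q + 1))⁻¹ * ((ζ i - z b) ^ (r + 1))⁻¹
        / deriv (fun w => chiFun z m l w - linf) (ζ i) = 0 := by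
  obtain ⟨F, hF⟩ := hdvd
  have hmonic : ((X - C (z a)) ^ (q + 1) * (X - C (z b)) ^ (r + 1)).Monic :=
    ((monic_X_sub_C _).pow _).mul ((monic_X_sub_C _).pow _)
  have hF0 : F ≠ 0 := by
    rintro rfl
    exact (poleDivisor_monic z m univ).ne_zero (by rw [hF, mul_zero])
  have hdegF : F.natDegree + 2 ≤ M := by
    have := congrArg natDegree hF
    rw [natDegree_poleDivisor, ← hM, hmonic.natDegree_mul' hF0, natDegree_mul
      (pow_ne_zero _ (X_sub_C_ne_zero _)) (pow_ne_zero _ (X_sub_C_ne_zero _)),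
      natDegree_pow, natDegree_pow, natDegree_X_sub_C, natDegree_X_sub_C] at this
    omega
  rw [sum_div_deriv_eq_neg_coeff_div z m hM hζ hζp hζ0
    (degree_lt_iff_coeff_zero _ _ |>.2 fun k hk => coeff_eq_zero_of_natDegree_lt (by omega))
      (F := F) fun i => ?_,
    coeff_eq_zero_of_natDegree_lt (by omega), zero_div, neg_zero]
  have hza := pow_ne_zero (q + 1) (sub_ne_zero.2 (hζp i a))
  have hzb := pow_ne_zero (r + 1) (sub_ne_zero.2 (hζp i b))
  rw [hF]
  simp only [eval_mul, eval_pow, eval_sub, eval_X, eval_C]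
  field_simp

theorem sum_inv_pow_mul_inv_pow_div_deriv_eq_neg_kappa (hM : M = ∑ c, (m c + 1))
    (hζ : Function.Injective ζ) (hζp : ∀ i c, ζ i ≠ z c)
    (hζ0 : ∀ i, chiFun z m l (ζ i) - linf = 0) (hlinf : linf ≠ 0) {a : Fin n}
    (hκ : ∀ q r : ℕ, q ≤ m a → r ≤ m a →
      ∑ p ∈ range (m a + 1 - r), κ a (p + q) * l a (p + r) = if q = r then 1 else 0)
    {q r : ℕ} (hq : q ≤ m a) (hr : r ≤ m a) (hqr : m a ≤ q + r) :
    ∑ i, ((ζ i - z a) ^ (q + 1))⁻¹ * ((ζ i - z a) ^ (r + 1))⁻¹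
        / deriv (fun w => chiFun z m l w - linf) (ζ i) = -κ a (q + r) := by
  obtain ⟨H, hH, hdegH, hcoeffH⟩ :=
    exists_poleDivisor_erase_sub_kappaPoly_mul_eq z m l linf κ a hκ hM (s := q + r - m a)
      (by omega)
  have hroot : ∀ i, (twistNumerator z m l linf).eval (ζ i) = 0 := fun i => by
    rw [eval_twistNumerator z m l linf (hζp i), hζ0 i, mul_zero]
  rw [sum_div_deriv_eq_neg_coeff_div z m hM hζ hζp hζ0
    (degree_lt_iff_coeff_zero _ _ |>.2 fun k hk => coeff_eq_zero_of_natDegree_lt (by omega))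
      (F := H) fun i => ?_,
    hcoeffH, mul_div_cancel_left₀ _ hlinf, show m a + (q + r - m a) = q + r by omega]
  have hGH := congrArg (eval (ζ i)) hH
  simp only [eval_sub, eval_mul, hroot i, mul_zero, sub_zero, eval_pow, eval_sub, eval_X,
    eval_C] at hGH
  have hza := sub_ne_zero.2 (hζp i a)
  rw [poleDivisor_eq_mul_erase z m (mem_univ a), eval_mul, hGH]
  simp only [eval_pow, eval_sub, eval_X, eval_C]
  have hexp : (ζ i - z a) ^ (m a + 1) * (ζ i - z a) ^ (q + r - m a + 1)
      = (ζ i - z a) ^ (q + 1) * (ζ i - z a) ^ (r + 1) := by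
    rw [← pow_add, ← pow_add]
    congr 1
    omega
  rw [← mul_assoc ((ζ i - z a) ^ (m a + 1)), hexp]
  field_simp

theorem sum_inv_pow_mul_inv_pow_div_deriv (hM : M = ∑ c, (m c + 1))
    (hζ : Function.Injective ζ) (hζp : ∀ i c, ζ i ≠ z c)
    (hζ0 : ∀ i, chiFun z m l (ζ i) - linf = 0) (hlinf : linf ≠ 0)
    (hl : ∀ a, l a (m a) ≠ 0)
    (hκ : ∀ a, ∀ q r : ℕ, q ≤ m a → r ≤ m a →
      ∑ p ∈ range (m a + 1 - r), κ a (p + q) * l a (p + r) = if q = r then 1 else 0)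
    {a b : Fin n} {q r : ℕ} (hq : q ≤ m a) (hr : r ≤ m b) :
    ∑ i, ((ζ i - z a) ^ (q + 1))⁻¹ * ((ζ i - z b) ^ (r + 1))⁻¹
        / deriv (fun w => chiFun z m l w - linf) (ζ i) = -(if a = b then κ a (q + r) else 0) := by
  by_cases hab : a = b
  · subst hab
    rw [if_pos rfl]
    rcases lt_or_ge (q + r) (m a) with hsmall | hlarge
    · rw [kappa_eq_zero_of_lt m l κ a (hl a) (hκ a) hsmall, neg_zero]
      refine sum_inv_pow_mul_inv_pow_div_deriv_eq_zero z m hM hζ hζp hζ0 ?_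
      rw [← pow_add, poleDivisor_eq_mul_erase z m (mem_univ a)]
      exact (pow_dvd_pow _ (by omega)).mul_right _
    · exact sum_inv_pow_mul_inv_pow_div_deriv_eq_neg_kappa z m κ hM hζ hζp hζ0 hlinf (hκ a)
        hq hr hlarge
  · rw [if_neg hab, neg_zero]
    refine sum_inv_pow_mul_inv_pow_div_deriv_eq_zero z m hM hζ hζp hζ0 ?_
    have hb : b ∈ univ.erase a := mem_erase.2 ⟨Ne.symm hab, mem_univ b⟩
    rw [poleDivisor_eq_mul_erase z m (mem_univ a), poleDivisor_eq_mul_erase z m hb, ← mul_assoc]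
    exact (mul_dvd_mul (pow_dvd_pow _ (by omega)) (pow_dvd_pow _ (by omega))).mul_right _

theorem gamFun_eq_sum_sigma {V : Type*} [AddCommGroup V] [Module ℂ V] (v : Fin n → ℕ → V)
    (w : ℂ) :
    gamFun z m v w
      = ∑ x ∈ univ.sigma fun a => range (m a + 1),
          ((w - z x.1) ^ (x.2 + 1))⁻¹ • v x.1 x.2 := by
  rw [Finset.sum_sigma]
  rfl

theorem sum_ssInt_zero_eq_sum_sigma {V : Type*} [AddCommGroup V] [Module ℂ V]
    (B : V →ₗ[ℂ] V →ₗ[ℂ] ℂ) (v : Fin n → ℕ → V) :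
    ∑ a, ssInt B m κ v a 0
      = 2⁻¹ * ∑ x ∈ univ.sigma (fun a => range (m a + 1)),
          ∑ y ∈ univ.sigma (fun a => range (m a + 1)),
            (if x.1 = y.1 then κ x.1 (x.2 + y.2) else 0) * B (v x.1 x.2) (v y.1 y.2) := by
  simp [ssInt, Finset.sum_sigma, Finset.mul_sum]

end TwistFunction

theorem momentum_eq_sum_of_quadratic_charges
    {n M : ℕ} {V : Type*} [AddCommGroup V] [Module ℂ V]
    (B : V →ₗ[ℂ] V →ₗ[ℂ] ℂ)
    (z : Fin n → ℂ) (m : Fin n → ℕ) (l : Fin n → ℕ → ℂ)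
    (linf : ℂ) (hlinf : linf ≠ 0)
    (hl : ∀ a, l a (m a) ≠ 0)
    -- the coefficients `κ^α_p`, characterised by the linear system (2.8) of the paper
    (κ : Fin n → ℕ → ℂ)
    (hκ : ∀ a, ∀ q r : ℕ, q ≤ m a → r ≤ m a →
      ∑ p ∈ Finset.range (m a + 1 - r), κ a (p + q) * l a (p + r)
        = if q = r then 1 else 0)
    (v : Fin n → ℕ → V)
    (hM : M = ∑ a, (m a + 1))
    (ζ : Fin M → ℂ) (hζinj : Function.Injective ζ)
    (hζp : ∀ i a, ζ i ≠ z a)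
    (hζ0 : ∀ i, chiFun z m l (ζ i) - linf = 0) :
    ∑ a, ssInt B m κ v a 0
      = -∑ i, B (gamFun z m v (ζ i)) (gamFun z m v (ζ i))
          / (2 * deriv (fun w => chiFun z m l w - linf) (ζ i)) := by
  set S := Finset.univ.sigma fun a => Finset.range (m a + 1)
  have hres : ∀ x ∈ S, ∀ y ∈ S,
      ∑ i, (deriv (fun w => chiFun z m l w - linf) (ζ i))⁻¹
          * ((ζ i - z x.1) ^ (x.2 + 1))⁻¹ * ((ζ i - z y.1) ^ (y.2 + 1))⁻¹
        = -(if x.1 = y.1 then κ x.1 (x.2 + y.2) else 0) := by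
    intro x hx y hy
    rw [Finset.mem_sigma, Finset.mem_range, Nat.lt_succ_iff] at hx hy
    simp_rw [← TwistFunction.sum_inv_pow_mul_inv_pow_div_deriv z m κ hM hζinj hζp hζ0 hlinf hl
      hκ hx.2 hy.2, div_eq_inv_mul, mul_assoc]
  calc ∑ a, ssInt B m κ v a 0
      = 2⁻¹ * ∑ x ∈ S, ∑ y ∈ S,
          (if x.1 = y.1 then κ x.1 (x.2 + y.2) else 0) * B (v x.1 x.2) (v y.1 y.2) :=
        TwistFunction.sum_ssInt_zero_eq_sum_sigma m κ B v
    _ = -(2⁻¹ * ∑ i, (deriv (fun w => chiFun z m l w - linf) (ζ i))⁻¹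
          * B (gamFun z m v (ζ i)) (gamFun z m v (ζ i))) := by
        simp only [TwistFunction.gamFun_eq_sum_sigma]
        rw [sum_mul_bilin_sum_smul, ← mul_neg, ← Finset.sum_neg_distrib]
        congr 1
        refine Finset.sum_congr rfl fun x hx => ?_
        rw [← Finset.sum_neg_distrib]
        refine Finset.sum_congr rfl fun y hy => ?_
        rw [hres x hx y hy, neg_mul, neg_neg]
    _ = _ := by
        rw [Finset.mul_sum]
        congr 1
        exact Finset.sum_congr rfl fun i _ => by ring
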